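/- For all m, n ≥ 1 and k ≥ 0, the graded component U_{m,n}^(k) splits into the cartesian product U_{m,n}^(k) = L_m^(k) × R_n^(k). -/

import Mathlib

open Finset

/-- `Π·h`: the vector whose `q`-th entry is the union of the `Π p` over all `p` with `h p = q`. -/
def dotAct {n : ℕ} (Pi : Fin n → Finset ℕ) (h : Fin n → Fin n) : Fin n → Finset ℕ :=
  fun q => (Finset.univ.filter (fun p => h p = q)).biUnion Pi

/-- Entrywise union of two vectors of sets. -/
def vUnion {n : ℕ} (Pi Pi' : Fin n → Finset ℕ) : Fin n → Finset ℕ :=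
  fun q => Pi q ∪ Pi' q

/-- `r = max (π₀ ∪ … ∪ π_{n−1})`. -/
def vMax {n : ℕ} (Pi : Fin n → Finset ℕ) : ℕ :=
  (Finset.univ.sup Pi).sup id

/-- `Π↑`: add `r = max (π₀ ∪ … ∪ π_{n−1})` to every element of every entry. -/
def vUp {n : ℕ} (Pi : Fin n → Finset ℕ) : Fin n → Finset ℕ :=
  fun q => (Pi q).image (· + vMax Pi)

/-- A `k`-EXPcomposition of size `n`: pairwise disjoint entries whose union is `{1,…,2^k}`. -/
def IsEXP {n : ℕ} (k : ℕ) (Pi : Fin n → Finset ℕ) : Prop :=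
  (∀ p q : Fin n, p ≠ q → Disjoint (Pi p) (Pi q)) ∧
    Finset.univ.sup Pi = Finset.Icc 1 (2 ^ k)

/-- A `k`-Rvalid vector of size `n`. -/
def IsRvalid {n : ℕ} (k : ℕ) (ρ : Fin n → Finset ℕ) : Prop :=
  IsEXP k ρ ∧ (∀ p : Fin n, p.val = 0 → 1 ∈ ρ p) ∧
    ∀ k' < k, ∀ i ∈ Finset.Icc 1 (2 ^ k'), ∀ j ∈ Finset.Icc 1 (2 ^ k'),
      (∃ α, i ∈ ρ α ∧ j ∈ ρ α) → ∃ β, i + 2 ^ k' ∈ ρ β ∧ j + 2 ^ k' ∈ ρ β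

/-- A `k`-Lvalid vector of size `m`. -/
def IsLvalid {m : ℕ} (k : ℕ) (lam : Fin m → Finset ℕ) : Prop :=
  IsEXP k lam ∧ (∀ p : Fin m, p.val = 0 → 2 ^ k ∈ lam p) ∧
    ∀ k' < k, ∀ i ∈ Finset.Icc 1 (2 ^ k'), ∀ j ∈ Finset.Icc 1 (2 ^ k'),
      (∃ α, 2 ^ k + 1 - i ∈ lam α ∧ 2 ^ k + 1 - j ∈ lam α) →
        ∃ β, 2 ^ k + 1 - (i + 2 ^ k') ∈ lam β ∧ 2 ^ k + 1 - (j + 2 ^ k') ∈ lam β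

/-- Number of nonempty entries of a vector of sets. -/
def nne {n : ℕ} (Pi : Fin n → Finset ℕ) : ℕ :=
  (Finset.univ.filter (fun q => Pi q ≠ ∅)).card

/-- `succ(P) = {P ∪ (P·g)↑ : g}`. -/
def succSet {n : ℕ} (P : Fin n → Finset ℕ) : Finset (Fin n → Finset ℕ) :=
  (Finset.univ : Finset (Fin n → Fin n)).image (fun g => vUnion P (vUp (dotAct P g)))

/-- The graded set `U_{m,n}^{(k)}` of U-pairs. -/
def Uset (m n : ℕ) : ℕ → Set ((Fin m → Finset ℕ) × (Fin n → Finset ℕ))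
  | 0 => {x | x = (fun p => if p.val = 0 then {1} else ∅,
                   fun q => if q.val = 0 then {1} else ∅)}
  | k + 1 => {x | ∃ L P, (L, P) ∈ Uset m n k ∧ ∃ (f : Fin m → Fin m) (g : Fin n → Fin n),
      x = (vUnion (dotAct L f) (vUp L), vUnion P (vUp (dotAct P g)))}

/-- The `r`-Stirling number: partitions of `{1,…,a}` into `b` nonempty blocks
with `1,…,r` in pairwise distinct blocks. -/
noncomputable def rStirling (a b r : ℕ) : ℕ :=
  Set.ncard {C : Finset (Finset ℕ) |
    C.card = b ∧ (∅ ∉ C) ∧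
    (∀ B ∈ C, ∀ B' ∈ C, B ≠ B' → Disjoint B B') ∧
    C.sup id = Finset.Icc 1 a ∧
    ∀ x ∈ Finset.Icc 1 r, ∀ y ∈ Finset.Icc 1 r, x ≠ y →
      ∀ B ∈ C, x ∈ B → y ∉ B}

/-- The Stirling number of the second kind: the number of partitions of an
`a`-element set into `b` nonempty blocks. -/
noncomputable def stirling2 (a b : ℕ) : ℕ := rStirling a b 0

/-- The entry `s_n^{(i,j)}` (with `1 ≤ i,j ≤ n`). -/
noncomputable def sEntry (n i j : ℕ) : ℕ :=
  if i ≤ j then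
    (j - i).factorial * Nat.choose (n - i) (j - i) *
      ∑ α ∈ Finset.Icc (j - i) i, Nat.choose i α * i ^ (i - α) * stirling2 α (j - i)
  else 0

/-- The matrix `S_n`, with rows and columns indexed by `{1,…,n}`. -/
noncomputable def Smat (n : ℕ) : Matrix (Fin n) (Fin n) ℕ :=
  fun i j => sEntry n (i.val + 1) (j.val + 1)

/-- One step of the shuffle-automaton action on subsets of the grid. -/
def stepE {m n : ℕ} (E : Finset (Fin m × Fin n)) (f : Fin m → Fin m) (g : Fin n → Fin n) :
    Finset (Fin m × Fin n) :=
  E.image (fun p => (f p.1, p.2)) ∪ E.image (fun p => (p.1, g p.2))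

/-- Reachability from `{(0,0)}` by finitely many steps. -/
def Reach {m n : ℕ} (hm : 0 < m) (hn : 0 < n) (E : Finset (Fin m × Fin n)) : Prop :=
  Relation.ReflTransGen (fun E1 E2 => ∃ f g, E2 = stepE E1 f g)
    {(⟨0, hm⟩, ⟨0, hn⟩)} E

/-- Reachability from `{(0,0)}` in at most `t` steps. -/
def ReachIn {m n : ℕ} (hm : 0 < m) (hn : 0 < n) :
    ℕ → Finset (Fin m × Fin n) → Prop
  | 0, E => E = {(⟨0, hm⟩, ⟨0, hn⟩)}
  | t + 1, E => ReachIn hm hn t E ∨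
      ∃ E' f g, ReachIn hm hn t E' ∧ E = stepE E' f g

/-- `s(Λ,P) = {(i,j) : λ_i ∩ ρ_j ≠ ∅}`. -/
def sTab {m n : ℕ} (L : Fin m → Finset ℕ) (P : Fin n → Finset ℕ) :
    Finset (Fin m × Fin n) :=
  Finset.univ.filter (fun p => (L p.1 ∩ P p.2).Nonempty)

/-!
Reading `{1, …, 2^(k+1)}` as two halves, a `(k+1)`-Rvalid vector `ρ'` is determined by its
lower half `P`, which is `k`-Rvalid, and by the map `g` sending the block of `P` containing `i`
to the block of `ρ'` containing `i + 2^k`; the coherence condition for `k' = k` is exactly what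
makes `g` well defined, so `ρ' = P ∪ (P·g)↑`. Conversely this formula preserves Rvalidity.
Reversing `{1, …, 2^k}` by `x ↦ 2^k + 1 - x` exchanges Lvalid and Rvalid vectors and turns
the step `Λ ↦ Λ·f ∪ Λ↑` into the step `P ↦ P ∪ (P·f)↑`, so the left factor follows from the
right one. Induction on `k` then splits `U_{m,n}^(k)`.
-/

lemma two_pow_add_two_pow_le {k' k : ℕ} (h : k' < k) : 2 ^ k' + 2 ^ k' ≤ 2 ^ k := by
  rw [← mul_two, ← pow_succ]
  exact Nat.pow_le_pow_right two_pos h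

section Vectors

variable {n : ℕ}

lemma mem_univ_sup_iff {P : Fin n → Finset ℕ} {x : ℕ} : x ∈ univ.sup P ↔ ∃ p, x ∈ P p := by
  simp [mem_sup]

lemma mem_dotAct {P : Fin n → Finset ℕ} {h : Fin n → Fin n} {q : Fin n} {x : ℕ} :
    x ∈ dotAct P h q ↔ ∃ p, h p = q ∧ x ∈ P p := by
  simp [dotAct]

lemma vMax_eq_of_univ_sup_eq_Icc {P : Fin n → Finset ℕ} {N : ℕ} (h : univ.sup P = Icc 1 N) :
    vMax P = N := by
  rw [vMax, h]
  rcases N.eq_zero_or_pos with rfl | hN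
  · rfl
  · exact le_antisymm (Finset.sup_le fun x hx => (mem_Icc.1 hx).2)
      (le_sup (f := id) (mem_Icc.2 ⟨hN, le_rfl⟩))

lemma mem_vUp_iff {P : Fin n → Finset ℕ} {N : ℕ} (h : univ.sup P = Icc 1 N) {q : Fin n}
    {x : ℕ} : x ∈ vUp P q ↔ N < x ∧ x - N ∈ P q := by
  simp only [vUp, vMax_eq_of_univ_sup_eq_Icc h, mem_image]
  constructor
  · rintro ⟨a, ha, rfl⟩
    have : 1 ≤ a := (mem_Icc.1 (h ▸ mem_univ_sup_iff.2 ⟨q, ha⟩)).1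
    exact ⟨by omega, by simpa using ha⟩
  · rintro ⟨hx, hx'⟩
    exact ⟨x - N, hx', by omega⟩

lemma isEXP_iff {k : ℕ} {P : Fin n → Finset ℕ} :
    IsEXP k P ↔ (∀ p, P p ⊆ Icc 1 (2 ^ k)) ∧ ∀ x ∈ Icc 1 (2 ^ k), ∃! p, x ∈ P p := by
  constructor
  · rintro ⟨hdisj, hsup⟩
    refine ⟨fun p x hx => hsup ▸ mem_univ_sup_iff.2 ⟨p, hx⟩, fun x hx => ?_⟩
    obtain ⟨p, hp⟩ := mem_univ_sup_iff.1 (hsup ▸ hx)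
    refine ⟨p, hp, fun q hq => ?_⟩
    by_contra hqp
    exact disjoint_left.1 (hdisj q p hqp) hq hp
  · rintro ⟨hsub, huniq⟩
    refine ⟨fun p q hpq => disjoint_left.2 fun x hp hq => hpq ?_, ?_⟩
    · exact (huniq x (hsub p hp)).unique hp hq
    · ext x
      refine ⟨fun hx => ?_, fun hx => mem_univ_sup_iff.2 (huniq x hx).exists⟩
      obtain ⟨p, hp⟩ := mem_univ_sup_iff.1 hx
      exact hsub p hp

namespace IsEXP

variable {k : ℕ} {P : Fin n → Finset ℕ}

lemma bounds_of_mem (hP : IsEXP k P) {p : Fin n} {x : ℕ} (hx : x ∈ P p) : 1 ≤ x ∧ x ≤ 2 ^ k :=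
  mem_Icc.1 ((isEXP_iff.1 hP).1 p hx)

lemma existsUnique (hP : IsEXP k P) {x : ℕ} (h₁ : 1 ≤ x) (h₂ : x ≤ 2 ^ k) : ∃! p, x ∈ P p :=
  (isEXP_iff.1 hP).2 x (mem_Icc.2 ⟨h₁, h₂⟩)

lemma eq_of_mem (hP : IsEXP k P) {p q : Fin n} {x : ℕ} (hp : x ∈ P p) (hq : x ∈ P q) :
    p = q :=
  (hP.existsUnique (hP.bounds_of_mem hp).1 (hP.bounds_of_mem hp).2).unique hp hq

lemma dotAct (hP : IsEXP k P) (h : Fin n → Fin n) : IsEXP k (dotAct P h) := by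
  refine isEXP_iff.2 ⟨fun q x hx => ?_, fun x hx => ?_⟩
  · obtain ⟨p, -, hp⟩ := mem_dotAct.1 hx
    exact mem_Icc.2 (hP.bounds_of_mem hp)
  · obtain ⟨p, hp, -⟩ := (isEXP_iff.1 hP).2 x hx
    refine ⟨h p, mem_dotAct.2 ⟨p, rfl, hp⟩, fun q hq => ?_⟩
    obtain ⟨p', rfl, hp'⟩ := mem_dotAct.1 hq
    rw [hP.eq_of_mem hp hp']

end IsEXP

end Vectors

section Rvalid

variable {n k : ℕ}

def rStep (P : Fin n → Finset ℕ) (g : Fin n → Fin n) : Fin n → Finset ℕ :=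
  vUnion P (vUp (dotAct P g))

lemma mem_rStep {P : Fin n → Finset ℕ} (hP : IsEXP k P) {g : Fin n → Fin n} {q : Fin n}
    {x : ℕ} : x ∈ rStep P g q ↔ x ∈ P q ∨ 2 ^ k < x ∧ x - 2 ^ k ∈ dotAct P g q := by
  rw [rStep, vUnion, Finset.mem_union, mem_vUp_iff (hP.dotAct g).2]

lemma IsEXP.rStep {P : Fin n → Finset ℕ} (hP : IsEXP k P) (g : Fin n → Fin n) :
    IsEXP (k + 1) (rStep P g) := by
  rw [isEXP_iff, pow_succ, mul_two]
  refine ⟨fun q x hx => ?_, fun x hx => ?_⟩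
  · rw [mem_Icc]
    rcases (mem_rStep hP).1 hx with h | ⟨-, h⟩
    · have := hP.bounds_of_mem h
      omega
    · have := (hP.dotAct g).bounds_of_mem h
      omega
  · rw [mem_Icc] at hx
    by_cases hlow : x ≤ 2 ^ k
    · obtain ⟨p, hp, huniq⟩ := hP.existsUnique hx.1 hlow
      refine ⟨p, (mem_rStep hP).2 (Or.inl hp), fun q hq => ?_⟩
      rcases (mem_rStep hP).1 hq with h | ⟨h, -⟩
      exacts [huniq q h, absurd h (by omega)]
    · obtain ⟨p, hp, huniq⟩ := hP.existsUnique (x := x - 2 ^ k) (by omega) (by omega)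
      refine ⟨g p, (mem_rStep hP).2 (Or.inr ⟨by omega, mem_dotAct.2 ⟨p, rfl, hp⟩⟩),
        fun q hq => ?_⟩
      rcases (mem_rStep hP).1 hq with h | ⟨-, h⟩
      · exact absurd (hP.bounds_of_mem h).2 hlow
      · obtain ⟨p', rfl, hp'⟩ := mem_dotAct.1 h
        rw [huniq p' hp']

lemma IsRvalid.isEXP {ρ : Fin n → Finset ℕ} (hρ : IsRvalid k ρ) : IsEXP k ρ := hρ.1

lemma IsRvalid.rStep {P : Fin n → Finset ℕ} (hP : IsRvalid k P) (g : Fin n → Fin n) :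
    IsRvalid (k + 1) (_root_.rStep P g) := by
  obtain ⟨hE, hone, hcoh⟩ := hP
  refine ⟨hE.rStep g, fun p hp => (mem_rStep hE).2 (Or.inl (hone p hp)), ?_⟩
  rintro k' hk' i hi j hj ⟨α, hiα, hjα⟩
  rw [mem_Icc] at hi hj
  have hk'k : 2 ^ k' ≤ 2 ^ k := Nat.pow_le_pow_right two_pos (Nat.lt_succ_iff.1 hk')
  have lower : ∀ {x}, x ≤ 2 ^ k' → x ∈ _root_.rStep P g α → x ∈ P α := fun hx h =>
    ((mem_rStep hE).1 h).resolve_right (by omega)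
  rcases Nat.lt_succ_iff_lt_or_eq.1 hk' with hlt | rfl
  · obtain ⟨β, hiβ, hjβ⟩ := hcoh k' hlt i (mem_Icc.2 hi) j (mem_Icc.2 hj)
      ⟨α, lower hi.2 hiα, lower hj.2 hjα⟩
    exact ⟨β, (mem_rStep hE).2 (Or.inl hiβ), (mem_rStep hE).2 (Or.inl hjβ)⟩
  · have upper : ∀ {x}, 1 ≤ x → x ∈ P α → x + 2 ^ k' ∈ _root_.rStep P g (g α) := fun hx h =>
      (mem_rStep hE).2 (Or.inr ⟨by omega, by simpa using mem_dotAct.2 ⟨α, rfl, h⟩⟩)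
    exact ⟨g α, upper hi.1 (lower hi.2 hiα), upper hj.1 (lower hj.2 hjα)⟩

lemma IsRvalid.exists_rStep_eq {ρ : Fin n → Finset ℕ} (hρ : IsRvalid (k + 1) ρ) :
    ∃ P g, IsRvalid k P ∧ ρ = _root_.rStep P g := by
  obtain ⟨hE, hone, hcoh⟩ := hρ
  have hbound : ∀ {q x}, x ∈ ρ q → 1 ≤ x ∧ x ≤ 2 ^ k + 2 ^ k := fun hx => by
    simpa [pow_succ, mul_two] using hE.bounds_of_mem hx
  set P : Fin n → Finset ℕ := fun q => (ρ q).filter (· ≤ 2 ^ k) with hPdef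
  have hPmem : ∀ {q x}, x ∈ P q ↔ x ∈ ρ q ∧ x ≤ 2 ^ k := by simp [hPdef]
  have hPE : IsEXP k P := by
    refine isEXP_iff.2 ⟨fun q x hx => ?_, fun x hx => ?_⟩
    · obtain ⟨hxρ, hx⟩ := hPmem.1 hx
      exact mem_Icc.2 ⟨(hbound hxρ).1, hx⟩
    · rw [mem_Icc] at hx
      obtain ⟨p, hp, huniq⟩ := hE.existsUnique hx.1 (by rw [pow_succ]; omega)
      exact ⟨p, hPmem.2 ⟨hp, hx.2⟩, fun q hq => huniq q (hPmem.1 hq).1⟩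
  have hshift : ∀ p, ∃ q, ∀ i ∈ P p, i + 2 ^ k ∈ ρ q := by
    intro p
    rcases (P p).eq_empty_or_nonempty with h | ⟨w, hw⟩
    · exact ⟨p, by simp [h]⟩
    obtain ⟨hwρ, hwk⟩ := hPmem.1 hw
    have hw1 := (hbound hwρ).1
    obtain ⟨q, hq, -⟩ := hE.existsUnique (x := w + 2 ^ k) (by omega) (by rw [pow_succ]; omega)
    refine ⟨q, fun i hi => ?_⟩
    obtain ⟨hiρ, hik⟩ := hPmem.1 hi
    obtain ⟨β, hiβ, hwβ⟩ := hcoh k k.lt_succ_self i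
      (mem_Icc.2 ⟨(hbound hiρ).1, hik⟩) w (mem_Icc.2 ⟨hw1, hwk⟩) ⟨p, hiρ, hwρ⟩
    rwa [hE.eq_of_mem hwβ hq] at hiβ
  choose g hg using hshift
  refine ⟨P, g, ⟨hPE, fun p hp => hPmem.2 ⟨hone p hp, Nat.one_le_two_pow⟩, ?_⟩, ?_⟩
  · rintro k' hk' i hi j hj ⟨α, hiα, hjα⟩
    obtain ⟨β, hiβ, hjβ⟩ := hcoh k' (Nat.lt_succ_of_lt hk') i hi j hj
      ⟨α, (hPmem.1 hiα).1, (hPmem.1 hjα).1⟩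
    have := two_pow_add_two_pow_le hk'
    rw [mem_Icc] at hi hj
    exact ⟨β, hPmem.2 ⟨hiβ, by omega⟩, hPmem.2 ⟨hjβ, by omega⟩⟩
  · funext q
    ext x
    rw [mem_rStep hPE, hPmem, mem_dotAct]
    by_cases hlow : x ≤ 2 ^ k
    · simp [hlow]
    constructor
    · intro hx
      have := hbound hx
      obtain ⟨p, hp, -⟩ := hPE.existsUnique (x := x - 2 ^ k) (by omega) (by omega)
      have hgp := hg p _ hp
      rw [Nat.sub_add_cancel (by omega)] at hgp
      exact Or.inr ⟨by omega, p, hE.eq_of_mem hgp hx, hp⟩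
    · rintro (⟨hx, -⟩ | ⟨hx, p, rfl, hp⟩)
      · exact hx
      · simpa [Nat.sub_add_cancel hx.le] using hg p _ hp

lemma isRvalid_succ_iff {ρ : Fin n → Finset ℕ} :
    IsRvalid (k + 1) ρ ↔ ∃ P g, IsRvalid k P ∧ ρ = rStep P g := by
  refine ⟨IsRvalid.exists_rStep_eq, ?_⟩
  rintro ⟨P, g, hP, rfl⟩
  exact hP.rStep g

lemma isRvalid_zero_iff (hn : 1 ≤ n) {ρ : Fin n → Finset ℕ} :
    IsRvalid 0 ρ ↔ ρ = fun q => if q.val = 0 then {1} else ∅ := by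
  constructor
  · rintro ⟨hE, hone, -⟩
    have hρ1 : ∀ {q x}, x ∈ ρ q → x = 1 := fun hx => by
      have := hE.bounds_of_mem hx
      simp only [pow_zero] at this
      omega
    funext q
    by_cases hq : q.val = 0
    · rw [if_pos hq]
      exact eq_singleton_iff_unique_mem.2 ⟨hone q hq, fun x hx => hρ1 hx⟩
    · rw [if_neg hq, eq_empty_iff_forall_notMem]
      intro x hx
      obtain rfl := hρ1 hx
      exact hq (congrArg Fin.val (hE.eq_of_mem hx (hone ⟨0, hn⟩ rfl)))
  · rintro rfl
    refine ⟨isEXP_iff.2 ⟨fun q x hx => ?_, fun x hx => ?_⟩, fun p hp => by simp [hp],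
      fun k' hk' => absurd hk' (Nat.not_lt_zero k')⟩
    · split_ifs at hx <;> simp_all
    · obtain rfl : x = 1 := by simpa using hx
      refine ⟨⟨0, hn⟩, by simp, fun q hq => Fin.ext ?_⟩
      by_contra h
      simp [h] at hq

end Rvalid

section Reversal

variable {n k : ℕ}

def vRev (N : ℕ) (P : Fin n → Finset ℕ) : Fin n → Finset ℕ :=
  fun q => (P q).image (N + 1 - ·)

lemma vRev_vUnion (N : ℕ) (P Q : Fin n → Finset ℕ) :
    vRev N (vUnion P Q) = vUnion (vRev N P) (vRev N Q) :=
  funext fun _ => image_union _ _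

lemma vRev_dotAct (N : ℕ) (P : Fin n → Finset ℕ) (h : Fin n → Fin n) :
    vRev N (dotAct P h) = dotAct (vRev N P) h :=
  funext fun _ => biUnion_image

lemma vRev_add_vUp {P : Fin n → Finset ℕ} {N : ℕ} (h : vMax P = N) :
    vRev (N + N) (vUp P) = vRev N P := by
  funext q
  simp only [vRev, vUp, h, image_image]
  congr 1
  funext i
  simp only [Function.comp_apply]
  omega

namespace IsEXP

variable {P : Fin n → Finset ℕ}

lemma mem_vRev (hP : IsEXP k P) {q : Fin n} {x : ℕ} :
    x ∈ vRev (2 ^ k) P q ↔ (1 ≤ x ∧ x ≤ 2 ^ k) ∧ 2 ^ k + 1 - x ∈ P q := by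
  simp only [vRev, mem_image]
  constructor
  · rintro ⟨a, ha, rfl⟩
    have := hP.bounds_of_mem ha
    refine ⟨by omega, ?_⟩
    rwa [Nat.sub_sub_self (by omega)]
  · rintro ⟨hx, hx'⟩
    exact ⟨_, hx', by omega⟩

lemma vRev (hP : IsEXP k P) : IsEXP k (vRev (2 ^ k) P) := by
  refine isEXP_iff.2 ⟨fun q x hx => mem_Icc.2 (hP.mem_vRev.1 hx).1, fun x hx => ?_⟩
  rw [mem_Icc] at hx
  obtain ⟨p, hp, huniq⟩ := hP.existsUnique (x := 2 ^ k + 1 - x) (by omega) (by omega)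
  exact ⟨p, hP.mem_vRev.2 ⟨hx, hp⟩, fun q hq => huniq q (hP.mem_vRev.1 hq).2⟩

lemma vRev_vRev (hP : IsEXP k P) : _root_.vRev (2 ^ k) (_root_.vRev (2 ^ k) P) = P := by
  funext q
  ext x
  rw [hP.vRev.mem_vRev, hP.mem_vRev]
  constructor
  · rintro ⟨hx, -, hx'⟩
    rwa [Nat.sub_sub_self (by omega)] at hx'
  · intro hx
    have := hP.bounds_of_mem hx
    exact ⟨by omega, by omega, by rwa [Nat.sub_sub_self (by omega)]⟩

lemma vRev_add_eq_vUp_vRev (hP : IsEXP k P) :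
    _root_.vRev (2 ^ k + 2 ^ k) P = vUp (_root_.vRev (2 ^ k) P) := by
  funext q
  rw [vUp, vMax_eq_of_univ_sup_eq_Icc hP.vRev.2]
  simp only [_root_.vRev, image_image]
  refine image_congr fun a ha => ?_
  have := hP.bounds_of_mem ha
  simp only [Function.comp_apply]
  omega

end IsEXP

end Reversal

section Lvalid

variable {n k : ℕ}

def lStep (L : Fin n → Finset ℕ) (f : Fin n → Fin n) : Fin n → Finset ℕ :=
  vUnion (dotAct L f) (vUp L)

lemma IsEXP.vRev_rStep {P : Fin n → Finset ℕ} (hP : IsEXP k P) (g : Fin n → Fin n) :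
    _root_.vRev (2 ^ (k + 1)) (_root_.rStep P g) = lStep (_root_.vRev (2 ^ k) P) g := by
  rw [pow_succ, mul_two, _root_.rStep, lStep, vRev_vUnion, hP.vRev_add_eq_vUp_vRev,
    vRev_add_vUp (vMax_eq_of_univ_sup_eq_Icc (hP.dotAct g).2), vRev_dotAct]
  exact funext fun _ => union_comm _ _

lemma IsEXP.isLvalid_iff {L : Fin n → Finset ℕ} (hL : IsEXP k L) :
    IsLvalid k L ↔ IsRvalid k (_root_.vRev (2 ^ k) L) := by
  have key : ∀ x, 1 ≤ x → x ≤ 2 ^ k → ∀ q, x ∈ _root_.vRev (2 ^ k) L q ↔ 2 ^ k + 1 - x ∈ L q :=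
    fun x h₁ h₂ q => by rw [hL.mem_vRev]; simp [h₁, h₂]
  refine and_congr (iff_of_true hL hL.vRev) (and_congr ?_ ?_)
  · refine forall₂_congr fun p _ => ?_
    rw [key 1 le_rfl Nat.one_le_two_pow, Nat.add_sub_cancel]
  · refine forall₂_congr fun k' hk' => forall₂_congr fun i hi => forall₂_congr fun j hj => ?_
    have := two_pow_add_two_pow_le hk'
    rw [mem_Icc] at hi hj
    simp only [key i (by omega) (by omega), key j (by omega) (by omega),
      key (i + 2 ^ k') (by omega) (by omega), key (j + 2 ^ k') (by omega) (by omega)]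

lemma IsEXP.isRvalid_iff {P : Fin n → Finset ℕ} (hP : IsEXP k P) :
    IsRvalid k P ↔ IsLvalid k (_root_.vRev (2 ^ k) P) := by
  rw [hP.vRev.isLvalid_iff, hP.vRev_vRev]

lemma IsLvalid.isEXP {L : Fin n → Finset ℕ} (hL : IsLvalid k L) : IsEXP k L := hL.1

lemma IsLvalid.lStep {L : Fin n → Finset ℕ} (hL : IsLvalid k L) (f : Fin n → Fin n) :
    IsLvalid (k + 1) (_root_.lStep L f) := by
  have hR : IsRvalid k (vRev (2 ^ k) L) := hL.isEXP.isLvalid_iff.1 hL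
  have hstep := hR.rStep f
  rwa [hstep.isEXP.isRvalid_iff, hR.isEXP.vRev_rStep, hL.isEXP.vRev_vRev] at hstep

lemma isLvalid_succ_iff {L' : Fin n → Finset ℕ} :
    IsLvalid (k + 1) L' ↔ ∃ L f, IsLvalid k L ∧ L' = lStep L f := by
  refine ⟨fun hL' => ?_, ?_⟩
  · obtain ⟨P, g, hP, hrev⟩ := (hL'.isEXP.isLvalid_iff.1 hL').exists_rStep_eq
    refine ⟨vRev (2 ^ k) P, g, hP.isEXP.isRvalid_iff.1 hP, ?_⟩
    rw [← hP.isEXP.vRev_rStep, ← hrev, hL'.isEXP.vRev_vRev]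
  · rintro ⟨L, f, hL, rfl⟩
    exact hL.lStep f

lemma isLvalid_zero_iff {L : Fin n → Finset ℕ} : IsLvalid 0 L ↔ IsRvalid 0 L := by
  simp [IsLvalid, IsRvalid]

end Lvalid

theorem stmt4 (m n k : ℕ) (hm : 1 ≤ m) (hn : 1 ≤ n) :
    Uset m n k = {x : (Fin m → Finset ℕ) × (Fin n → Finset ℕ) |
      IsLvalid k x.1 ∧ IsRvalid k x.2} := by
  induction k with
  | zero =>
    ext ⟨L, P⟩
    simp only [Uset, Set.mem_ofPred_eq, Prod.mk.injEq, isLvalid_zero_iff, isRvalid_zero_iff hm,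
      isRvalid_zero_iff hn]
  | succ k ih =>
    ext ⟨L', P'⟩
    simp only [Uset, ih, Set.mem_ofPred_eq, Prod.mk.injEq, isLvalid_succ_iff, isRvalid_succ_iff]
    constructor
    · rintro ⟨L, P, ⟨hL, hP⟩, f, g, rfl, rfl⟩
      exact ⟨⟨L, f, hL, rfl⟩, ⟨P, g, hP, rfl⟩⟩
    · rintro ⟨⟨L, f, hL, rfl⟩, ⟨P, g, hP, rfl⟩⟩
      exact ⟨L, P, ⟨hL, hP⟩, f, g, rfl, rfl⟩
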